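/- For every irreducible fraction p/q with 0 < p/q < 1 and q ≥ 2, the boundary degree of the Haros graph G_{p/q} (the last entry k_1 + k_{q+1} of its reduced degree sequence) is strictly greater than every inner degree: k_1 + k_{q+1} > k_i for all 2 ≤ i ≤ q. -/

import Mathlib

/-- Symbols for paths in the Farey binary tree. -/
inductive LR
  | L
  | R
deriving DecidableEq

/-- One step in the Farey binary tree: update the current pair of fractions
(represented as pairs (numerator, denominator) of naturals). -/
def fareyStep : ((ℕ × ℕ) × (ℕ × ℕ)) → LR → ((ℕ × ℕ) × (ℕ × ℕ))
  | ((a, b), (c, d)), LR.L => ((a, b), (a + c, b + d))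
  | ((a, b), (c, d)), LR.R => ((a + c, b + d), (c, d))

/-- The final pair of fractions of a word: after reading the first symbol `L`
the current pair is (0/1, 1/1); the remaining symbols update it. -/
def finalPair (w : List LR) : (ℕ × ℕ) × (ℕ × ℕ) :=
  w.tail.foldl fareyStep ((0, 1), (1, 1))

/-- The value ⟨w⟩ of a word: the mediant of its final pair, as (numerator, denominator). -/
def value (w : List LR) : ℕ × ℕ :=
  ((finalPair w).1.1 + (finalPair w).2.1, (finalPair w).1.2 + (finalPair w).2.2)

/-- A word over {L,R} is a Farey word when its first symbol is `L`. -/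
def IsFareyWord (w : List LR) : Prop := w.head? = some LR.L

/-- Concatenation of degree sequences:
[a₁,…,a_s] ⊕ [b₁,…,b_t] = [a₁+1, a₂, …, a_{s−1}, a_s+b₁, b₂, …, b_{t−1}, b_t+1]. -/
def oplus (A B : List ℕ) : List ℕ :=
  (A.dropLast.modifyHead (· + 1)) ++ [A.getLastD 0 + B.headD 0] ++ B.tail.dropLast
    ++ [B.getLastD 0 + 1]

/-- Update of the pair (D(left ancestor), D(right ancestor)) of unreduced degree
sequences along one symbol. -/
def degStep : (List ℕ × List ℕ) → LR → (List ℕ × List ℕ)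
  | (A, B), LR.L => (A, oplus A B)
  | (A, B), LR.R => (oplus A B, B)

/-- The pair (D(a/b), D(c/d)) of unreduced degree sequences of the final pair of a word;
0/1 and 1/1 are both assigned the list [1,1]. -/
def degPair (w : List LR) : List ℕ × List ℕ :=
  w.tail.foldl degStep ([1, 1], [1, 1])

/-- The unreduced degree sequence D(⟨w⟩) = D(a/b) ⊕ D(c/d) of the value of a word. -/
def Dseq (w : List LR) : List ℕ :=
  oplus (degPair w).1 (degPair w).2

/-- Reduction: [k₁,…,k_{q+1}] becomes [k₂,…,k_q, k₁+k_{q+1}]; the last entry is the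
boundary degree and the remaining ones are the inner degrees. -/
def reduce (D : List ℕ) : List ℕ :=
  D.tail.dropLast ++ [D.headD 0 + D.getLastD 0]

/-- The reduced degree sequence of the Haros graph G_{⟨w⟩}. -/
def degSeq (w : List LR) : List ℕ := reduce (Dseq w)

/-- Degree-distribution entropy S of the Haros graph G_{⟨w⟩}:
S = −Σ_k P(k)·ln P(k), summed over the degree values occurring in the reduced
degree sequence, where P(k) = m(k)/q. -/
noncomputable def Sent (w : List LR) : ℝ :=
  -∑ k ∈ (degSeq w).toFinset,
    (((degSeq w).count k : ℝ) / ((value w).2 : ℝ)) *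
      Real.log (((degSeq w).count k : ℝ) / ((value w).2 : ℝ))

/-- Reduced entropy H of the Haros graph G_{⟨w⟩} (with the convention 0·ln 0 = 0,
automatic since Real.log 0 = 0). -/
noncomputable def Hent (w : List LR) : ℝ :=
  let x : ℝ := ((value w).1 : ℝ) / ((value w).2 : ℝ)
  if x ≤ 1 / 2 then
    Sent w + 2 * x * Real.log x + (1 - 2 * x) * Real.log (1 - 2 * x)
  else
    Sent w + 2 * (1 - x) * Real.log (1 - x) + (2 * x - 1) * Real.log (2 * x - 1)

/-!
The unreduced sequence `D(p/q) = D(a/b) ⊕ D(c/d)` has outer entries `α + 1` and `ω + 1`, where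
`α` is the first entry of `D(a/b)` and `ω` the last entry of `D(c/d)`, so the boundary degree is
`α + ω + 2`. Its inner entries are the inner entries of `D(a/b)` and `D(c/d)` together with the
glued entry (last of `D(a/b)`) + (first of `D(c/d)`). By induction along the Farey path all of these
are at most `α + ω + 1`, hence below the boundary degree; the induction also carries the bounds
(last of `D(a/b)`) ≤ `ω + 1` and (first of `D(c/d)`) ≤ `α + 1`, which keep the glued entry small.
-/

lemma oplus_cons_concat (a x b y : ℕ) (A B : List ℕ) :
    oplus (a :: (A ++ [x])) (b :: (B ++ [y])) = (a + 1) :: (A ++ [x + b] ++ B ++ [y + 1]) := by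
  rw [oplus, ← List.cons_append, ← List.cons_append, List.dropLast_concat,
    List.getLastD_concat, List.getLastD_concat]
  simp

lemma reduce_cons_concat (a y : ℕ) (M : List ℕ) : reduce (a :: (M ++ [y])) = M ++ [a + y] := by
  rw [reduce, List.tail_cons, List.dropLast_concat, List.headD_cons, ← List.cons_append,
    List.getLastD_concat]

def DominatedPair (P : List ℕ × List ℕ) : Prop :=
  ∃ a A x b B y, P = (a :: (A ++ [x]), b :: (B ++ [y])) ∧
    (∀ k ∈ A ++ B, k ≤ a + y) ∧ x + b ≤ a + y + 1 ∧ x ≤ y + 1 ∧ b ≤ a + 1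

lemma le_of_mem_oplus_inner {a x b y : ℕ} {A B : List ℕ} (hAB : ∀ k ∈ A ++ B, k ≤ a + y)
    (hxb : x + b ≤ a + y + 1) : ∀ k ∈ A ++ [x + b] ++ B, k ≤ a + y + 1 := by
  intro k hk
  simp only [List.mem_append, List.mem_singleton] at hk
  rcases hk with (hk | rfl) | hk
  · exact (hAB k (List.mem_append_left B hk)).trans (Nat.le_succ _)
  · exact hxb
  · exact (hAB k (List.mem_append_right A hk)).trans (Nat.le_succ _)

lemma DominatedPair.degStep {P : List ℕ × List ℕ} (hP : DominatedPair P) (s : LR) :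
    DominatedPair (degStep P s) := by
  obtain ⟨a, A, x, b, B, y, rfl, hAB, hxb, hx, hb⟩ := hP
  have hinner := le_of_mem_oplus_inner hAB hxb
  cases s with
  | L =>
    refine ⟨a, A, x, a + 1, A ++ [x + b] ++ B, y + 1, by simp [_root_.degStep, oplus_cons_concat],
      ?_, by omega, by omega, le_rfl⟩
    intro k hk
    rcases List.mem_append.1 hk with hk | hk
    · exact (hAB k (List.mem_append_left B hk)).trans (by omega)
    · exact (hinner k hk).trans (by omega)
  | R =>
    refine ⟨a + 1, A ++ [x + b] ++ B, y + 1, b, B, y, by simp [_root_.degStep, oplus_cons_concat],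
      ?_, by omega, le_rfl, by omega⟩
    intro k hk
    rcases List.mem_append.1 hk with hk | hk
    · exact (hinner k hk).trans (by omega)
    · exact (hAB k (List.mem_append_right A hk)).trans (by omega)

lemma dominatedPair_degPair (w : List LR) : DominatedPair (degPair w) := by
  suffices ∀ (l : List LR) (P : List ℕ × List ℕ), DominatedPair P →
      DominatedPair (l.foldl degStep P) from
    this _ _ ⟨1, [], 1, 1, [], 1, rfl, by simp, by omega, by omega, by omega⟩
  intro l
  induction l with
  | nil => exact fun _ h => h
  | cons s l ih => exact fun P h => ih _ (h.degStep s)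

theorem statement6_general (w : List LR) :
    ∀ k ∈ (degSeq w).dropLast, k < (degSeq w).getLastD 0 := by
  obtain ⟨a, A, x, b, B, y, hP, hAB, hxb, -, -⟩ := dominatedPair_degPair w
  have hdeg : degSeq w = A ++ [x + b] ++ B ++ [a + 1 + (y + 1)] := by
    rw [degSeq, Dseq, hP, oplus_cons_concat, reduce_cons_concat]
  rw [hdeg, List.dropLast_concat, List.getLastD_concat]
  intro k hk
  have := le_of_mem_oplus_inner hAB hxb k hk
  omega

/-- for every irreducible fraction p/q with 0 < p/q < 1 and q ≥ 2, the
boundary degree (last entry of the reduced degree sequence) of G_{p/q} is strictly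
greater than every inner degree (the preceding entries). -/
theorem statement6 (p q : ℕ) (hcop : Nat.Coprime p q) (hp : 0 < p) (hpq : p < q)
    (hq2 : 2 ≤ q) (w : List LR) (hw : IsFareyWord w) (hval : value w = (p, q)) :
    ∀ k ∈ (degSeq w).dropLast, k < (degSeq w).getLastD 0 :=
  statement6_general w
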